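/- Let l, h > 0 and ψg ∈ ℂ. Set d = 1 + e^{(2+2i)h} - l + e^{(2+2i)h} l, A = ψg (l-1)/d, B = -ψg e^{(2+2i)h}(l+1)/d, D = -2 ψg e^{(1+i)h + (1+i)h/l}/d, and define ψ : [0,∞) → ℂ by ψ(z) = A e^{(1+i)z} + B e^{-(1+i)z} + ψg for 0 ≤ z ≤ h and ψ(z) = D e^{-(1+i)z/l} + ψg for z ≥ h. Then ψ is well defined and continuous on [0,∞), ψ(0) = 0, ψ(z) → ψg as z → ∞, ψ''(z) = 2i(ψ(z) - ψg) for 0 < z < h, l² ψ''(z) = 2i(ψ(z) - ψg) for z > h, and the one-sided derivatives at h satisfy ψ'_-(h) = l² ψ'_+(h). -/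

import Mathlib

/-!
On each layer `ψ - ψg` is a combination of `e^{±(1+i)z/√K}`, which solves `K f'' = (1+i)² f = 2i f`;
on the upper layer only the decaying exponential is kept. The condition `ψ(0) = 0` reads `A + B + ψg = 0`,
which needs `d ≠ 0`; this holds because `|e^{(2+2i)h}| ≥ 1 > |l - 1| / (l + 1)`.
Since `ψ` is continuous at `h` by construction, `D e^{-(1+i)h/l} = ψ(h) - ψg`, and the flux condition
reduces to the identity `A e^{(1+i)h} (l + 1) + B e^{-(1+i)h} (l - 1) = 0`.
-/

open Complex Filter Set Topology

noncomputable def expPair (a b c k : ℂ) (z : ℝ) : ℂ :=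
  a * exp (c * z) + b * exp (-c * z) + k

section ExpPair

variable {a b c k : ℂ}

theorem hasDerivAt_expPair (z : ℝ) :
    HasDerivAt (expPair a b c k) (expPair (c * a) (-(c * b)) c 0 z) z := by
  have hexp (c : ℂ) : HasDerivAt (fun t : ℝ => exp (c * t)) (exp (c * z) * c) z := by
    simpa using (((hasDerivAt_id (z : ℂ)).const_mul c).cexp).comp_ofReal
  refine ((((hexp c).const_mul a).add ((hexp (-c)).const_mul b)).add_const k).congr_deriv ?_
  rw [expPair]
  ring

theorem deriv_expPair : deriv (expPair a b c k) = expPair (c * a) (-(c * b)) c 0 :=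
  funext fun z => (hasDerivAt_expPair z).deriv

theorem deriv_deriv_expPair (z : ℝ) :
    deriv (deriv (expPair a b c k)) z = c ^ 2 * (expPair a b c k z - k) := by
  simp only [deriv_expPair, expPair]
  ring

theorem continuous_expPair : Continuous (expPair a b c k) := by
  unfold expPair
  fun_prop

theorem tendsto_expPair_zero_atTop (hc : 0 < c.re) :
    Tendsto (expPair 0 b c k) atTop (𝓝 k) := by
  have hre : Tendsto (fun z : ℝ => (-c * z).re) atTop atBot := by
    simpa using tendsto_id.const_mul_atTop_of_neg (neg_neg_of_pos hc)
  have hexp := tendsto_exp_comap_re_atBot.comp (tendsto_comap_iff.2 hre)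
  convert (hexp.const_mul b).add_const k using 2 with z
  · simp [expPair]
  · simp

end ExpPair

theorem deriv_deriv_congr_of_eqOn {𝕜 F : Type*} [NontriviallyNormedField 𝕜] [NormedAddCommGroup F]
    [NormedSpace 𝕜 F] {f g : 𝕜 → F} {s : Set 𝕜} {z : 𝕜} (hs : IsOpen s) (hfg : EqOn f g s)
    (hz : z ∈ s) : deriv (deriv f) z = deriv (deriv g) z :=
  (hfg.eventuallyEq_of_mem (hs.mem_nhds hz)).deriv.deriv_eq

theorem one_add_sub_add_mul_ne_zero {w : ℂ} {l : ℝ} (hw : 1 ≤ ‖w‖) (hl : 0 < l) :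
    1 + w - l + w * l ≠ 0 := by
  intro h0
  have hnorm : ‖w‖ * (1 + l) = |l - 1| := by
    have := congrArg norm (show w * (1 + l : ℝ) = (l - 1 : ℝ) by push_cast; linear_combination h0)
    rwa [norm_mul, norm_real, norm_real, Real.norm_of_nonneg (by linarith)] at this
  have : |l - 1| < 1 + l := abs_lt.2 ⟨by linarith, by linarith⟩
  nlinarith

theorem one_add_exp_sub_add_mul_ne_zero {l h : ℝ} (hl : 0 < l) (hh : 0 ≤ h) :
    1 + exp ((2 + 2 * I) * h) - l + exp ((2 + 2 * I) * h) * l ≠ 0 := by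
  refine one_add_sub_add_mul_ne_zero ?_ hl
  rw [norm_exp]
  simpa using Real.one_le_exp (by positivity : 0 ≤ 2 * h)

theorem one_add_I_sq : (1 + I) ^ 2 = 2 * I := by
  rw [add_sq, I_sq]
  ring

theorem deriv_expPair_eq_sq_mul_of_balance {A B D c k L : ℂ} {h : ℝ} (hL : L ≠ 0)
    (hcont : expPair A B c k h = expPair 0 D (c / L) k h)
    (hbalance : A * exp (c * h) * (L + 1) + B * exp (-c * h) * (L - 1) = 0) :
    deriv (expPair A B c k) h = L ^ 2 * deriv (expPair 0 D (c / L) k) h := by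
  have hLc : L ^ 2 * (c / L) = L * c := by field_simp
  simp only [deriv_expPair, expPair] at hcont ⊢
  linear_combination c * hbalance - L * c * hcont + D * exp (-(c / L) * h) * hLc

section Coefficients

variable {ψg W L d : ℂ}

theorem coeffs_add_add_eq_zero (hd : d = 1 + W - L + W * L) (hd0 : d ≠ 0) :
    ψg * (L - 1) / d + -(ψg * W * (L + 1)) / d + ψg = 0 := by
  field_simp
  linear_combination ψg * hd

theorem coeffs_balance {E F : ℂ} (hWF : W * F = E) :
    ψg * (L - 1) / d * E * (L + 1) + -(ψg * W * (L + 1)) / d * F * (L - 1) = 0 := by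
  linear_combination (-(ψg * (L + 1) * (L - 1) / d)) * hWF

end Coefficients

theorem one_jump_solution_properties_general (l h : ℝ) (hl : 0 < l) (hh : 0 < h) (ψg : ℂ)
    (d A B D : ℂ)
    (hd : d = 1 + Complex.exp ((2 + 2 * Complex.I) * h) - l
        + Complex.exp ((2 + 2 * Complex.I) * h) * l)
    (hA : A = ψg * ((l : ℂ) - 1) / d)
    (hB : B = -(ψg * Complex.exp ((2 + 2 * Complex.I) * h) * ((l : ℂ) + 1)) / d)
    (ψ : ℝ → ℂ)
    (hψlow : ∀ z ∈ Set.Icc (0 : ℝ) h,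
      ψ z = A * Complex.exp ((1 + Complex.I) * z) + B * Complex.exp (-(1 + Complex.I) * z) + ψg)
    (hψhigh : ∀ z ∈ Set.Ici h,
      ψ z = D * Complex.exp (-(1 + Complex.I) * z / l) + ψg) :
    -- well-definedness: the two formulas agree at z = h
    (A * Complex.exp ((1 + Complex.I) * h) + B * Complex.exp (-(1 + Complex.I) * h) + ψg
        = D * Complex.exp (-(1 + Complex.I) * h / l) + ψg) ∧
    ContinuousOn ψ (Set.Ici (0 : ℝ)) ∧
    ψ 0 = 0 ∧
    Filter.Tendsto ψ Filter.atTop (nhds ψg) ∧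
    (∀ z ∈ Set.Ioo (0 : ℝ) h,
      deriv (deriv ψ) z = 2 * Complex.I * (ψ z - ψg)) ∧
    (∀ z ∈ Set.Ioi h,
      (l : ℂ) ^ 2 * deriv (deriv ψ) z = 2 * Complex.I * (ψ z - ψg)) ∧
    (∃ dm dp : ℂ, HasDerivWithinAt ψ dm (Set.Icc 0 h) h ∧
      HasDerivWithinAt ψ dp (Set.Ici h) h ∧ dm = (l : ℂ) ^ 2 * dp) := by
  set c : ℂ := 1 + I with hc
  have hlow : EqOn ψ (expPair A B c ψg) (Icc 0 h) := fun z hz => by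
    rw [hψlow z hz, expPair]
  have hhigh : EqOn ψ (expPair 0 D (c / l) ψg) (Ici h) := fun z hz => by
    rw [hψhigh z hz, expPair, zero_mul, zero_add]
    congr 3
    ring
  have hh_mem : h ∈ Icc 0 h := ⟨hh.le, le_rfl⟩
  have hlC : (l : ℂ) ≠ 0 := ofReal_ne_zero.2 hl.ne'
  refine ⟨(hψlow h hh_mem).symm.trans (hψhigh h self_mem_Ici), ?_, ?_, ?_, ?_, ?_, ?_⟩
  · rw [← Icc_union_Ici_eq_Ici hh.le]
    exact (continuous_expPair.continuousOn.congr hlow).union_of_isClosed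
      (continuous_expPair.continuousOn.congr hhigh) isClosed_Icc isClosed_Ici
  · rw [hlow ⟨le_rfl, hh.le⟩]
    simp only [expPair, ofReal_zero, mul_zero, exp_zero, mul_one, hA, hB]
    exact coeffs_add_add_eq_zero hd (hd ▸ one_add_exp_sub_add_mul_ne_zero hl hh.le)
  · refine (tendsto_expPair_zero_atTop ?_).congr' (hhigh.eventuallyEq_of_mem (Ici_mem_atTop h)).symm
    rw [div_ofReal_re]
    simpa [hc] using hl
  · intro z hz
    rw [deriv_deriv_congr_of_eqOn isOpen_Ioo (hlow.mono Ioo_subset_Icc_self) hz, deriv_deriv_expPair,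
      one_add_I_sq, hlow (Ioo_subset_Icc_self hz)]
  · intro z hz
    rw [deriv_deriv_congr_of_eqOn isOpen_Ioi (hhigh.mono Ioi_subset_Ici_self) hz, deriv_deriv_expPair,
      hhigh (Ioi_subset_Ici_self hz), ← mul_assoc, ← mul_pow, mul_div_cancel₀ _ hlC, one_add_I_sq]
  · have hW : exp ((2 + 2 * I) * h) * exp (-c * h) = exp (c * h) := by
      rw [← exp_add, hc]
      ring_nf
    have hbalance : A * exp (c * h) * (l + 1) + B * exp (-c * h) * (l - 1) = 0 := by
      rw [hA, hB]
      exact coeffs_balance hW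
    refine ⟨_, _, (hasDerivAt_expPair h).hasDerivWithinAt.congr hlow (hlow hh_mem),
      (hasDerivAt_expPair h).hasDerivWithinAt.congr hhigh (hhigh self_mem_Ici), ?_⟩
    simpa only [deriv_expPair] using deriv_expPair_eq_sq_mul_of_balance hlC
      ((hlow hh_mem).symm.trans (hhigh self_mem_Ici)) hbalance

theorem one_jump_solution_properties (l h : ℝ) (hl : 0 < l) (hh : 0 < h) (ψg : ℂ)
    (d A B D : ℂ)
    (hd : d = 1 + Complex.exp ((2 + 2 * Complex.I) * h) - l
        + Complex.exp ((2 + 2 * Complex.I) * h) * l)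
    (hA : A = ψg * ((l : ℂ) - 1) / d)
    (hB : B = -(ψg * Complex.exp ((2 + 2 * Complex.I) * h) * ((l : ℂ) + 1)) / d)
    (hD : D = -(2 * ψg * Complex.exp ((1 + Complex.I) * h + (1 + Complex.I) * h / l)) / d)
    (ψ : ℝ → ℂ)
    (hψlow : ∀ z ∈ Set.Icc (0 : ℝ) h,
      ψ z = A * Complex.exp ((1 + Complex.I) * z) + B * Complex.exp (-(1 + Complex.I) * z) + ψg)
    (hψhigh : ∀ z ∈ Set.Ici h,
      ψ z = D * Complex.exp (-(1 + Complex.I) * z / l) + ψg) :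
    -- well-definedness: the two formulas agree at z = h
    (A * Complex.exp ((1 + Complex.I) * h) + B * Complex.exp (-(1 + Complex.I) * h) + ψg
        = D * Complex.exp (-(1 + Complex.I) * h / l) + ψg) ∧
    ContinuousOn ψ (Set.Ici (0 : ℝ)) ∧
    ψ 0 = 0 ∧
    Filter.Tendsto ψ Filter.atTop (nhds ψg) ∧
    (∀ z ∈ Set.Ioo (0 : ℝ) h,
      deriv (deriv ψ) z = 2 * Complex.I * (ψ z - ψg)) ∧
    (∀ z ∈ Set.Ioi h,
      (l : ℂ) ^ 2 * deriv (deriv ψ) z = 2 * Complex.I * (ψ z - ψg)) ∧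
    (∃ dm dp : ℂ, HasDerivWithinAt ψ dm (Set.Icc 0 h) h ∧
      HasDerivWithinAt ψ dp (Set.Ici h) h ∧ dm = (l : ℂ) ^ 2 * dp) :=
  one_jump_solution_properties_general l h hl hh ψg d A B D hd hA hB ψ hψlow hψhigh
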